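/- Let G₁, …, Gₙ be compact Lie groups with closed subgroups Lₖ ≤ Gₖ and injective homomorphisms ψₖ: Lₖ → Gₖ₊₁ for 1 ≤ k ≤ n−1. Define G = G₁ × ⋯ × Gₙ, let A be the subgroup of elements (1, ℓ₂, ℓ₂, ℓ₄, ℓ₄, …) with ℓ₂ᵢ ∈ L₂ᵢ (each appearing in coordinates 2i and 2i+1 via ψ), and B the subgroup of elements (ℓ₁, ℓ₁, ℓ₃, ℓ₃, …) with ℓ₂ᵢ₋₁ ∈ L₂ᵢ₋₁. Then the map A(g₁,g₂,…,gₙ)B ↦ g₁ ⊗ g₂⁻¹ ⊗ g₃ ⊗ g₄⁻¹ ⊗ ⋯ ⊗ gₙ^{(−1)ⁿ}Lₙ is a well-defined homeomorphism from the biquotient A\G/B to the iterated balanced product G₁ ⊗_{L₁} G₂ ⊗_{L₂} ⋯ ⊗_{Lₙ₋₁} Gₙ/Lₙ. -/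

import Mathlib

section

variable (n : ℕ) (G : ℕ → Type*) [∀ k, Group (G k)]
  (L : ∀ k, Subgroup (G k)) (ψ : ∀ k, L k →* G (k + 1))

/-- The relation on `G₀ × ⋯ × G_{n-1}` defining the iterated balanced product
`G₀ ⊗_{L₀} G₁ ⊗_{L₁} ⋯ ⊗_{L_{n-2}} G_{n-1} / L_{n-1}`:
`(h₀, h₁, …) ~ (h₀ ℓ₀⁻¹, ψ₀(ℓ₀) h₁ ℓ₁⁻¹, …, ψ_{n-2}(ℓ_{n-2}) h_{n-1} ℓ_{n-1}⁻¹)`. -/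
def balancedRel : (∀ i : Fin n, G i.val) → (∀ i : Fin n, G i.val) → Prop :=
  fun h h' => ∃ ℓ : ∀ i : Fin n, L i.val,
    (∀ h0 : 0 < n, h' ⟨0, h0⟩ = h ⟨0, h0⟩ * ((ℓ ⟨0, h0⟩ : G 0))⁻¹) ∧
    (∀ (j : ℕ) (hj : j + 1 < n),
      h' ⟨j + 1, hj⟩ =
        ψ j (ℓ ⟨j, Nat.lt_of_succ_lt hj⟩) * h ⟨j + 1, hj⟩ * ((ℓ ⟨j + 1, hj⟩ : G (j + 1)))⁻¹)

/-- The subgroup-like subset `A` of `G₀ × ⋯ × G_{n-1}` consisting of tuples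
`(1, ℓ₁, ψ₁(ℓ₁), ℓ₃, ψ₃(ℓ₃), …)` (in the 1-based indexing of the paper, these are the
tuples `(1, ℓ₂, ℓ₂, ℓ₄, ℓ₄, …)` with `ℓ₂ᵢ ∈ L₂ᵢ` appearing in coordinates `2i`, `2i+1`
via `ψ`). -/
def Aset : Set (∀ i : Fin n, G i.val) :=
  {f | (∀ h0 : 0 < n, f ⟨0, h0⟩ = 1) ∧
    ∀ (j : ℕ) (hj : 2 * j + 1 < n), ∃ ℓ : L (2 * j + 1),
      f ⟨2 * j + 1, hj⟩ = (ℓ : G (2 * j + 1)) ∧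
      ∀ hj2 : 2 * j + 2 < n, f ⟨2 * j + 2, hj2⟩ = ψ (2 * j + 1) ℓ}

/-- The subgroup-like subset `B` of `G₀ × ⋯ × G_{n-1}` consisting of tuples
`(ℓ₀, ψ₀(ℓ₀), ℓ₂, ψ₂(ℓ₂), …)` (in the 1-based indexing of the paper, the tuples
`(ℓ₁, ℓ₁, ℓ₃, ℓ₃, …)` with `ℓ₂ᵢ₋₁ ∈ L₂ᵢ₋₁`). -/
def Bset : Set (∀ i : Fin n, G i.val) :=
  {f | ∀ (j : ℕ) (hj : 2 * j < n), ∃ ℓ : L (2 * j),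
    f ⟨2 * j, hj⟩ = (ℓ : G (2 * j)) ∧
    ∀ hj2 : 2 * j + 1 < n, f ⟨2 * j + 1, hj2⟩ = ψ (2 * j) ℓ}

/-- The biquotient relation: `g ~ a g b⁻¹` for `a ∈ A`, `b ∈ B`, i.e. the orbit relation of
the action `(a, b) · g = a g b⁻¹` of `A × B` on `G = G₀ × ⋯ × G_{n-1}`. -/
def biquotRel : (∀ i : Fin n, G i.val) → (∀ i : Fin n, G i.val) → Prop :=
  fun g g' => ∃ a ∈ Aset n G L ψ, ∃ b ∈ Bset n G L ψ, g' = a * g * b⁻¹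

end

section AuxDefs

variable (n : ℕ) (G : ℕ → Type*) [∀ k, Group (G k)]
  (L : ∀ k, Subgroup (G k)) (ψ : ∀ k, L k →* G (k + 1))

def phiMap (g : ∀ i : Fin n, G i.val) : ∀ i : Fin n, G i.val :=
  fun i => if i.val % 2 = 0 then g i else (g i)⁻¹

lemma phiMap_phiMap (g : ∀ i : Fin n, G i.val) : phiMap n G (phiMap n G g) = g := by
  funext i
  by_cases h : i.val % 2 = 0 <;> simp [phiMap, h]

lemma biquot_to_balanced {g g' : ∀ i : Fin n, G i.val}
    (h : biquotRel n G L ψ g g') :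
    balancedRel n G L ψ (phiMap n G g) (phiMap n G g') := by
  obtain ⟨a, ha, b, hb, hg⟩ := h
  have hg' : ∀ i, g' i = a i * g i * (b i)⁻¹ := fun i => by rw [hg]; rfl
  have memfn : ∀ i : Fin n, (if i.val % 2 = 0 then b i else a i) ∈ L i.val := by
    rintro ⟨iv, hlt⟩
    by_cases hpar : iv % 2 = 0
    · obtain ⟨k, hk⟩ : ∃ k, iv = 2 * k := ⟨iv / 2, by omega⟩
      subst hk
      obtain ⟨ℓ₀, h1, -⟩ := hb k hlt
      rw [if_pos hpar]
      rw [show b ⟨2 * k, hlt⟩ = (ℓ₀ : G (2 * k)) from h1]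
      exact ℓ₀.2
    · obtain ⟨k, hk⟩ : ∃ k, iv = 2 * k + 1 := ⟨iv / 2, by omega⟩
      subst hk
      obtain ⟨ℓ₀, h1, -⟩ := ha.2 k hlt
      rw [if_neg hpar]
      rw [show a ⟨2 * k + 1, hlt⟩ = (ℓ₀ : G (2 * k + 1)) from h1]
      exact ℓ₀.2
  refine ⟨fun i => ⟨_, memfn i⟩, ?_, ?_⟩
  · intro h0
    have e1 : (phiMap n G g') ⟨0, h0⟩ = g' ⟨0, h0⟩ := if_pos rfl
    have e2 : (phiMap n G g) ⟨0, h0⟩ = g ⟨0, h0⟩ := if_pos rfl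
    have e3 : ((⟨if (0 : ℕ) % 2 = 0 then b ⟨0, h0⟩ else a ⟨0, h0⟩,
        memfn ⟨0, h0⟩⟩ : L 0) : G 0) = b ⟨0, h0⟩ :=
      show (if (0 : ℕ) % 2 = 0 then b ⟨0, h0⟩ else a ⟨0, h0⟩) = b ⟨0, h0⟩ from if_pos rfl
    rw [e1, e2, e3, hg' ⟨0, h0⟩, ha.1 h0, one_mul]
  · intro j hj
    by_cases hpar : j % 2 = 0
    · -- j = 2k, index j+1 odd
      obtain ⟨k, hk⟩ : ∃ k, j = 2 * k := ⟨j / 2, by omega⟩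
      subst hk
      obtain ⟨ℓ₀, h1, h2⟩ := hb k (Nat.lt_of_succ_lt hj)
      have hodd : ¬((2 * k + 1) % 2 = 0) := by omega
      have e1 : (phiMap n G g') ⟨2 * k + 1, hj⟩ = (g' ⟨2 * k + 1, hj⟩)⁻¹ := if_neg hodd
      have e2 : (phiMap n G g) ⟨2 * k + 1, hj⟩ = (g ⟨2 * k + 1, hj⟩)⁻¹ := if_neg hodd
      have e3 : ((⟨if (2 * k + 1) % 2 = 0 then b ⟨2 * k + 1, hj⟩ else a ⟨2 * k + 1, hj⟩,
          memfn ⟨2 * k + 1, hj⟩⟩ : L (2 * k + 1)) : G (2 * k + 1)) = a ⟨2 * k + 1, hj⟩ :=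
        show (if (2 * k + 1) % 2 = 0 then b ⟨2 * k + 1, hj⟩ else a ⟨2 * k + 1, hj⟩)
            = a ⟨2 * k + 1, hj⟩ from if_neg hodd
      have e4 : (⟨if (2 * k) % 2 = 0 then b ⟨2 * k, Nat.lt_of_succ_lt hj⟩
            else a ⟨2 * k, Nat.lt_of_succ_lt hj⟩,
          memfn ⟨2 * k, Nat.lt_of_succ_lt hj⟩⟩ : L (2 * k)) = ℓ₀ := by
        apply Subtype.ext
        show (if (2 * k) % 2 = 0 then b ⟨2 * k, Nat.lt_of_succ_lt hj⟩
            else a ⟨2 * k, Nat.lt_of_succ_lt hj⟩) = (ℓ₀ : G (2 * k))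
        rw [if_pos hpar]
        exact h1
      beta_reduce
      rw [e1, e2, e3, e4, ← h2 hj, hg' ⟨2 * k + 1, hj⟩]
      simp [mul_assoc]
    · -- j = 2k+1, index j+1 = 2k+2 even
      obtain ⟨k, hk⟩ : ∃ k, j = 2 * k + 1 := ⟨j / 2, by omega⟩
      subst hk
      obtain ⟨ℓ₀, h1, h2⟩ := ha.2 k (Nat.lt_of_succ_lt hj)
      have hev : (2 * k + 1 + 1) % 2 = 0 := by omega
      have e1 : (phiMap n G g') ⟨2 * k + 1 + 1, hj⟩ = g' ⟨2 * k + 1 + 1, hj⟩ := if_pos hev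
      have e2 : (phiMap n G g) ⟨2 * k + 1 + 1, hj⟩ = g ⟨2 * k + 1 + 1, hj⟩ := if_pos hev
      have e3 : ((⟨if (2 * k + 1 + 1) % 2 = 0 then b ⟨2 * k + 1 + 1, hj⟩
            else a ⟨2 * k + 1 + 1, hj⟩,
          memfn ⟨2 * k + 1 + 1, hj⟩⟩ : L (2 * k + 1 + 1)) : G (2 * k + 1 + 1)) =
          b ⟨2 * k + 1 + 1, hj⟩ :=
        show (if (2 * k + 1 + 1) % 2 = 0 then b ⟨2 * k + 1 + 1, hj⟩
            else a ⟨2 * k + 1 + 1, hj⟩) = b ⟨2 * k + 1 + 1, hj⟩ from if_pos hev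
      have e4 : (⟨if (2 * k + 1) % 2 = 0 then b ⟨2 * k + 1, Nat.lt_of_succ_lt hj⟩
            else a ⟨2 * k + 1, Nat.lt_of_succ_lt hj⟩,
          memfn ⟨2 * k + 1, Nat.lt_of_succ_lt hj⟩⟩ : L (2 * k + 1)) = ℓ₀ := by
        apply Subtype.ext
        show (if (2 * k + 1) % 2 = 0 then b ⟨2 * k + 1, Nat.lt_of_succ_lt hj⟩
            else a ⟨2 * k + 1, Nat.lt_of_succ_lt hj⟩) = (ℓ₀ : G (2 * k + 1))
        rw [if_neg hpar]
        exact h1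
      beta_reduce
      rw [e1, e2, e3, e4, ← h2 hj, hg' ⟨2 * k + 1 + 1, hj⟩]

end AuxDefs

section Aux2

variable (n : ℕ) (G : ℕ → Type*) [∀ k, Group (G k)]
  (L : ∀ k, Subgroup (G k)) (ψ : ∀ k, L k →* G (k + 1))

def aAux (ℓ : ∀ i : Fin n, L i.val) : ∀ m : ℕ, m < n → G m
  | 0, _ => 1
  | (j+1), h =>
    if j % 2 = 0 then (ℓ ⟨j + 1, h⟩ : G (j + 1))
    else (ψ j (ℓ ⟨j, Nat.lt_of_succ_lt h⟩) : G (j + 1))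

def bAux (ℓ : ∀ i : Fin n, L i.val) : ∀ m : ℕ, m < n → G m
  | 0, h => (ℓ ⟨0, h⟩ : G 0)
  | (j+1), h =>
    if j % 2 = 0 then (ψ j (ℓ ⟨j, Nat.lt_of_succ_lt h⟩) : G (j + 1))
    else (ℓ ⟨j + 1, h⟩ : G (j + 1))

lemma aAux_zero (ℓ : ∀ i : Fin n, L i.val) (h : 0 < n) : aAux n G L ψ ℓ 0 h = 1 := rfl

lemma aAux_succ (ℓ : ∀ i : Fin n, L i.val) (j : ℕ) (h : j + 1 < n) :
    aAux n G L ψ ℓ (j + 1) h =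
      if j % 2 = 0 then (ℓ ⟨j + 1, h⟩ : G (j + 1))
      else (ψ j (ℓ ⟨j, Nat.lt_of_succ_lt h⟩) : G (j + 1)) := rfl

lemma bAux_zero (ℓ : ∀ i : Fin n, L i.val) (h : 0 < n) :
    bAux n G L ψ ℓ 0 h = (ℓ ⟨0, h⟩ : G 0) := rfl

lemma bAux_succ (ℓ : ∀ i : Fin n, L i.val) (j : ℕ) (h : j + 1 < n) :
    bAux n G L ψ ℓ (j + 1) h =
      if j % 2 = 0 then (ψ j (ℓ ⟨j, Nat.lt_of_succ_lt h⟩) : G (j + 1))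
      else (ℓ ⟨j + 1, h⟩ : G (j + 1)) := rfl

lemma balanced_to_biquot {h h' : ∀ i : Fin n, G i.val}
    (hbal : balancedRel n G L ψ h h') :
    biquotRel n G L ψ (phiMap n G h) (phiMap n G h') := by
  obtain ⟨ℓ, e0, eS⟩ := hbal
  refine ⟨fun i => aAux n G L ψ ℓ i.val i.isLt, ⟨fun h0 => rfl, ?_⟩,
    fun i => bAux n G L ψ ℓ i.val i.isLt, ?_, ?_⟩
  · -- Aset second condition
    intro j hj
    refine ⟨ℓ ⟨2 * j + 1, hj⟩, ?_, ?_⟩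
    · have := aAux_succ n G L ψ ℓ (2 * j) hj
      rw [if_pos (Nat.mul_mod_right 2 j)] at this
      exact this
    · intro hj2
      have := aAux_succ n G L ψ ℓ (2 * j + 1) hj2
      rw [if_neg (by omega : ¬((2 * j + 1) % 2 = 0))] at this
      exact this
  · -- Bset condition
    intro j hj
    refine ⟨ℓ ⟨2 * j, hj⟩, ?_, ?_⟩
    · rcases j with _ | k
      · exact bAux_zero n G L ψ ℓ hj
      · have := bAux_succ n G L ψ ℓ (2 * k + 1) hj
        rw [if_neg (by omega : ¬((2 * k + 1) % 2 = 0))] at this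
        exact this
    · intro hj2
      have := bAux_succ n G L ψ ℓ (2 * j) hj2
      rw [if_pos (Nat.mul_mod_right 2 j)] at this
      exact this
  · -- product equation
    funext i
    obtain ⟨m, hm⟩ := i
    show phiMap n G h' ⟨m, hm⟩ =
      aAux n G L ψ ℓ m hm * phiMap n G h ⟨m, hm⟩ * (bAux n G L ψ ℓ m hm)⁻¹
    rcases m with _ | j
    · have p1 : phiMap n G h' ⟨0, hm⟩ = h' ⟨0, hm⟩ := if_pos rfl
      have p2 : phiMap n G h ⟨0, hm⟩ = h ⟨0, hm⟩ := if_pos rfl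
      rw [p1, p2, aAux_zero, bAux_zero, e0 hm, one_mul]
    · by_cases hpar : j % 2 = 0
      · -- odd index j+1
        have hodd : ¬((j + 1) % 2 = 0) := by omega
        have p1 : phiMap n G h' ⟨j + 1, hm⟩ = (h' ⟨j + 1, hm⟩)⁻¹ := if_neg hodd
        have p2 : phiMap n G h ⟨j + 1, hm⟩ = (h ⟨j + 1, hm⟩)⁻¹ := if_neg hodd
        rw [p1, p2, aAux_succ, bAux_succ, if_pos hpar, if_pos hpar, eS j hm]
        simp [mul_assoc]
      · -- even index j+1
        have hev : (j + 1) % 2 = 0 := by omega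
        have p1 : phiMap n G h' ⟨j + 1, hm⟩ = h' ⟨j + 1, hm⟩ := if_pos hev
        have p2 : phiMap n G h ⟨j + 1, hm⟩ = h ⟨j + 1, hm⟩ := if_pos hev
        rw [p1, p2, aAux_succ, bAux_succ, if_neg hpar, if_neg hpar, eS j hm]

end Aux2

lemma eqvGen_lift {α β : Type*} {r : α → α → Prop} {s : β → β → Prop} (f : α → β)
    (hf : ∀ a b, r a b → s (f a) (f b)) :
    ∀ {a b}, Relation.EqvGen r a b → Relation.EqvGen s (f a) (f b) := by
  intro a b h
  induction h with
  | rel x y hxy => exact .rel _ _ (hf _ _ hxy)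
  | refl x => exact .refl _
  | symm x y _ ih => exact .symm _ _ ih
  | trans x y z _ _ ih1 ih2 => exact .trans _ _ _ ih1 ih2


/-- Let `G₁, …, Gₙ` be compact Lie groups (here: compact Hausdorff topological groups) with
closed subgroups `Lₖ ≤ Gₖ` and injective continuous homomorphisms `ψₖ : Lₖ → Gₖ₊₁`.  With
`G = G₁ × ⋯ × Gₙ`, `A` the subgroup of tuples `(1, ℓ₂, ℓ₂, ℓ₄, ℓ₄, …)` and `B` the subgroup
of tuples `(ℓ₁, ℓ₁, ℓ₃, ℓ₃, …)`, the map
`A (g₁, …, gₙ) B ↦ g₁ ⊗ g₂⁻¹ ⊗ g₃ ⊗ g₄⁻¹ ⊗ ⋯ ⊗ gₙ^{(−1)ⁿ} Lₙ`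
is a well-defined homeomorphism from the biquotient `A \ G / B` to the iterated balanced
product `G₁ ⊗_{L₁} G₂ ⊗_{L₂} ⋯ ⊗_{L_{n-1}} Gₙ / Lₙ`. -/
theorem biquotient_homeomorph_balancedProduct
    (n : ℕ) (hn : 1 ≤ n) (G : ℕ → Type*) [∀ k, Group (G k)]
    [∀ k, TopologicalSpace (G k)] [∀ k, IsTopologicalGroup (G k)]
    [∀ k, CompactSpace (G k)] [∀ k, T2Space (G k)]
    (L : ∀ k, Subgroup (G k)) (hLclosed : ∀ k, IsClosed ((L k : Set (G k))))
    (ψ : ∀ k, L k →* G (k + 1))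
    (hψcont : ∀ k, Continuous (ψ k)) (hψinj : ∀ k, Function.Injective (ψ k)) :
    ∃ e : Quotient (Relation.EqvGen.setoid (biquotRel n G L ψ)) ≃ₜ
          Quotient (Relation.EqvGen.setoid (balancedRel n G L ψ)),
      ∀ g : ∀ i : Fin n, G i.val,
        e (Quotient.mk _ g) =
          Quotient.mk _ (fun i : Fin n => if i.val % 2 = 0 then g i else (g i)⁻¹) := by
  set φ := phiMap n G with hφ
  have key : ∀ g g', Relation.EqvGen (biquotRel n G L ψ) g g' ↔
      Relation.EqvGen (balancedRel n G L ψ) (φ g) (φ g') := by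
    intro g g'
    constructor
    · exact eqvGen_lift φ fun a b hab => biquot_to_balanced n G L ψ hab
    · intro hgen
      have := eqvGen_lift φ (fun a b hab => balanced_to_biquot n G L ψ hab) hgen
      rwa [hφ, phiMap_phiMap, phiMap_phiMap] at this
  have contφ : Continuous φ := by
    refine continuous_pi fun i => ?_
    by_cases hi : i.val % 2 = 0
    · simpa [hφ, phiMap, hi] using continuous_apply i
    · show Continuous fun a => φ a i
      simp only [hφ, phiMap, if_neg hi]
      exact (continuous_apply i).inv
  let φe : (∀ i : Fin n, G i.val) ≃ (∀ i : Fin n, G i.val) :=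
    ⟨φ, φ, fun g => phiMap_phiMap n G g, fun g => phiMap_phiMap n G g⟩
  let eq : Quotient (Relation.EqvGen.setoid (biquotRel n G L ψ)) ≃
      Quotient (Relation.EqvGen.setoid (balancedRel n G L ψ)) :=
    Quotient.congr φe key
  have hcont1 : Continuous eq := by
    rw [(isQuotientMap_quotient_mk').continuous_iff]
    exact continuous_quotient_mk'.comp contφ
  have hcont2 : Continuous eq.symm := by
    rw [(isQuotientMap_quotient_mk').continuous_iff]
    exact continuous_quotient_mk'.comp contφ
  exact ⟨⟨eq, hcont1, hcont2⟩, fun g => rfl⟩
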